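/- Let M ≥ 0 be an integer, s ≥ 0 and N ≥ 1 real numbers, and let P ⊆ {l/2^{M+1} : l odd, 1 ≤ l < 2^{M+1}} be any set of K points of this form (K = |P|). Then the number of pairs (x, y) with x ∈ {k/2^M : 0 ≤ k < 2^M}, y ∈ P, and ‖x - y‖ ≤ s/N equals ⌈⌊(s/N)·2^{M+1}⌋/2⌉ · K · 2, provided ⌊(s/N)·2^{M+1}⌋ < 2^M. -/

import Mathlib

/-!
For `y = l / 2 ^ (M + 1)` with `l` odd and `x = k / 2 ^ M`, `x - y = (2 k - l) / 2 ^ (M + 1)`, whose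
distance to `ℤ` is `|r| / 2 ^ (M + 1)` for the balanced residue `r` of `2 k - l` modulo `2 ^ (M + 1)`.
As `k` runs over `0, …, 2 ^ M - 1`, `r` runs bijectively over the odd balanced residues, so the
number of `x` with `‖x - y‖ ≤ s / N` is the number of odd integers in `[-m, m]`,
`m = ⌊(s / N) 2 ^ (M + 1)⌋ < 2 ^ M`, namely `2 ⌈m / 2⌉`, whatever `y ∈ P` is.
-/

open scoped Classical

/-- Radical-inverse function in base 2. -/
noncomputable def g2 (n : ℕ) : ℝ :=
  ∑ j ∈ Finset.range (n + 1), (if n.testBit j then ((2 : ℝ) ^ (j + 1))⁻¹ else 0)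

/-- Van der Corput sequence in base 2, indexed from 1, with x₁ = 0. -/
noncomputable def vdc (i : ℕ) : ℝ := g2 (i - 1)

/-- Distance to the nearest integer. -/
noncomputable def nint (x : ℝ) : ℝ := |x - round x|

/-- Finite empiric pair correlation function of the van der Corput sequence in base 2. -/
noncomputable def F (N : ℕ) (s : ℝ) : ℝ :=
  (((Finset.Icc 1 N ×ˢ Finset.Icc 1 N).filter
      (fun p => p.1 ≠ p.2 ∧ nint (vdc p.1 - vdc p.2) ≤ s / N)).card : ℝ) / N

open Finset

theorem nint_add_intCast (x : ℝ) (z : ℤ) : nint (x + z) = nint x := by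
  simp only [nint, round_add_intCast, Int.cast_add, add_sub_add_right_eq_sub]

theorem nint_eq_abs_of_mem_Ico {x : ℝ} (h₁ : -(1 / 2) ≤ x) (h₂ : x < 1 / 2) : nint x = |x| := by
  rw [nint, round_eq_zero_iff.2 ⟨h₁, h₂⟩, Int.cast_zero, sub_zero]

theorem nint_intCast_div_natCast (a : ℤ) (n : ℕ) : nint (a / n) = |(a.bmod n : ℝ)| / n := by
  rcases n.eq_zero_or_pos with rfl | hn
  · simp [nint]
  have hnR : (0 : ℝ) < n := by exact_mod_cast hn
  have hlo : -(n : ℤ) ≤ 2 * a.bmod n := by have := Int.le_bmod (x := a) hn; omega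
  have hhi : 2 * a.bmod n < n := by have := Int.bmod_lt (x := a) hn; omega
  have hlo' : -(n : ℝ) ≤ 2 * a.bmod n := by exact_mod_cast hlo
  have hhi' : 2 * (a.bmod n : ℝ) < n := by exact_mod_cast hhi
  have hsplit : (a : ℝ) / n = a.bmod n / n + a.bdiv n := by
    have h := congrArg (Int.cast : ℤ → ℝ) (Int.bmod_add_bdiv a n)
    push_cast at h
    field_simp
    linarith
  rw [hsplit, nint_add_intCast, nint_eq_abs_of_mem_Ico, abs_div, abs_of_pos hnR]
  · rw [le_div_iff₀ hnR]; linarith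
  · rw [div_lt_iff₀ hnR]; linarith

theorem Int.ceil_intCast_div_two {α : Type*} [Field α] [LinearOrder α] [IsStrictOrderedRing α]
    [FloorRing α] (m : ℤ) : ⌈(m : α) / 2⌉ = (m + 1) / 2 := by
  rw [Int.ceil_eq_iff, lt_div_iff₀ two_pos, div_le_iff₀ two_pos]
  constructor
  · exact_mod_cast (by omega : ((m + 1) / 2 - 1) * 2 < m)
  · exact_mod_cast (by omega : m ≤ (m + 1) / 2 * 2)

theorem card_filter_odd_Icc_neg (m : ℤ) (hm : 0 ≤ m) :
    (((Icc (-m) m).filter Odd).card : ℤ) = (m + 1) / 2 * 2 := by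
  have himage :
      (Icc (-m) m).filter Odd = (Ico (-((m + 1) / 2)) ((m + 1) / 2)).image (2 * · + 1) := by
    ext r
    simp only [mem_filter, mem_Icc, mem_image, mem_Ico, Int.odd_iff]
    constructor
    · rintro ⟨⟨h₁, h₂⟩, h₃⟩
      exact ⟨r / 2, by omega, by omega⟩
    · rintro ⟨j, ⟨h₁, h₂⟩, rfl⟩
      omega
  rw [himage, card_image_of_injective _ (fun a b h => by simpa using h), Int.card_Ico]
  omega

theorem card_filter_range_abs_bmod_le (n : ℕ) {l : ℤ} (hl : Odd l) {m : ℤ} (hm : m < n) :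
    ((range n).filter fun k : ℕ => |(2 * k - l).bmod (2 * n)| ≤ m).card =
      ((Icc (-m) m).filter Odd).card := by
  obtain ⟨a, rfl⟩ := hl
  have left_inv {k : ℕ} (hk : k < n) :
      (((2 * k - (2 * a + 1)).bmod (2 * n) + 2 * a + 1) / 2 % n).toNat = k := by
    obtain ⟨q, hq⟩ := Int.dvd_bmod_sub_self (x := 2 * k - (2 * a + 1)) (m := 2 * n)
    push_cast at hq
    have hhalf : ((2 * k - (2 * a + 1)).bmod (2 * n) + 2 * a + 1) / 2 = k + n * q := by
      rw [show (2 * k - (2 * a + 1)).bmod (2 * n) + 2 * a + 1 = 2 * (k + n * q) by linarith]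
      exact Int.mul_ediv_cancel_left _ two_ne_zero
    rw [hhalf, Int.add_mul_emod_self_left, Int.emod_eq_of_lt (by positivity) (by exact_mod_cast hk),
      Int.toNat_natCast]
  have right_inv {r : ℤ} (hr : |r| ≤ m) (hodd : r % 2 = 1) :
      (2 * (((r + 2 * a + 1) / 2 % n).toNat : ℤ) - (2 * a + 1)).bmod (2 * n) = r := by
    rw [abs_le] at hr
    have hn : (n : ℤ) ≠ 0 := by omega
    have hhalf : 2 * ((r + 2 * a + 1) / 2) = r + 2 * a + 1 := by omega
    rw [Int.toNat_of_nonneg (Int.emod_nonneg _ hn), Int.bmod_eq_iff (by omega)]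
    refine ⟨by omega, by omega, ⟨(r + 2 * a + 1) / 2 / n, ?_⟩⟩
    rw [Int.emod_def]
    push_cast
    linarith
  refine card_nbij' (fun k => (2 * k - (2 * a + 1)).bmod (2 * n))
    (fun r => ((r + 2 * a + 1) / 2 % n).toNat) ?_ ?_ ?_ ?_
  · intro k hk
    simp only [coe_filter, mem_range, Set.mem_ofPred_eq, mem_Icc, Int.odd_iff] at hk ⊢
    obtain ⟨c, hc⟩ := (dvd_mul_right (2 : ℤ) n).trans
      (Int.dvd_bmod_sub_self (x := 2 * k - (2 * a + 1)) (m := 2 * n))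
    exact ⟨abs_le.1 hk.2, by omega⟩
  · intro r hr
    simp only [coe_filter, mem_range, Set.mem_ofPred_eq, mem_Icc, Int.odd_iff] at hr ⊢
    have hr' : |r| ≤ m := abs_le.2 hr.1
    refine ⟨?_, by rw [right_inv hr' hr.2]; exact hr'⟩
    have := Int.emod_lt_of_pos ((r + 2 * a + 1) / 2) (by omega : (0 : ℤ) < n)
    omega
  · intro k hk
    simp only [coe_filter, mem_range, Set.mem_ofPred_eq] at hk
    exact left_inv hk.1
  · intro r hr
    simp only [coe_filter, mem_Icc, Set.mem_ofPred_eq, Int.odd_iff] at hr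
    exact right_inv (abs_le.2 hr.1) hr.2

theorem card_filter_range_nint_sub_le (n : ℕ) {l : ℤ} (hl : Odd l) {t : ℝ} (ht : 0 ≤ t)
    (htn : ⌊t * (2 * n)⌋ < n) :
    (((range n).filter fun k : ℕ => nint (k / n - l / (2 * n)) ≤ t).card : ℤ) =
      ⌈(⌊t * (2 * n)⌋ : ℝ) / 2⌉ * 2 := by
  have hn : 0 < n := by
    have := Int.floor_nonneg.2 (by positivity : 0 ≤ t * (2 * n))
    omega
  have hcond (k : ℕ) :
      nint (k / n - l / (2 * n)) ≤ t ↔ |(2 * k - l).bmod (2 * n)| ≤ ⌊t * (2 * n)⌋ := by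
    rw [show (k : ℝ) / n - l / (2 * n) = ((2 * k - l : ℤ) : ℝ) / ((2 * n : ℕ) : ℝ) by
      push_cast; field_simp, nint_intCast_div_natCast, div_le_iff₀ (by positivity), Int.le_floor]
    push_cast
    rfl
  rw [filter_congr fun k _ => hcond k, card_filter_range_abs_bmod_le n hl htn,
    card_filter_odd_Icc_neg _ (Int.floor_nonneg.2 (by positivity)), Int.ceil_intCast_div_two]

theorem Finset.card_filter_product_eq_sum {α β : Type*} (s : Finset α) (t : Finset β)
    (p : α × β → Prop) [DecidablePred p] :
    ((s ×ˢ t).filter p).card = ∑ b ∈ t, (s.filter fun a => p (a, b)).card := by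
  simp only [card_filter, sum_product_right]

theorem stmt5 (M : ℕ) (s N : ℝ) (hs : 0 ≤ s) (hN : 1 ≤ N)
    (P : Finset ℝ)
    (hP : ∀ y ∈ P, ∃ l : ℕ, Odd l ∧ 1 ≤ l ∧ l < 2 ^ (M + 1) ∧ y = (l : ℝ) / 2 ^ (M + 1))
    (h : ⌊s / N * 2 ^ (M + 1)⌋ < 2 ^ M) :
    (((((Finset.range (2 ^ M)).image (fun k => (k : ℝ) / 2 ^ M)) ×ˢ P).filter
        (fun p => nint (p.1 - p.2) ≤ s / N)).card : ℤ)
      = ⌈(⌊s / N * 2 ^ (M + 1)⌋ : ℝ) / 2⌉ * P.card * 2 := by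
  have ht : 0 ≤ s / N := div_nonneg hs (by linarith)
  -- In the statement `Finset.range (2 ^ M)` is elaborated as a `Finset ℝ` (monadic coercion).
  have hX : (Finset.range (2 ^ M)).image (fun k => (k : ℝ) / 2 ^ M) =
      (range (2 ^ M)).image fun k : ℕ => (k : ℝ) / 2 ^ M := by
    ext; simp
  have hfiber : ∀ y ∈ P, ((((range (2 ^ M)).image fun k : ℕ => (k : ℝ) / 2 ^ M).filter
      fun x => nint (x - y) ≤ s / N).card : ℤ) = ⌈(⌊s / N * 2 ^ (M + 1)⌋ : ℝ) / 2⌉ * 2 := by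
    intro y hy
    obtain ⟨l, hl, -, -, rfl⟩ := hP y hy
    rw [filter_image, card_image_of_injective _ fun a b hab => by simpa using hab]
    have := card_filter_range_nint_sub_le (2 ^ M) (l := l) (by exact_mod_cast hl) ht
      (by push_cast; rw [← pow_succ']; exact_mod_cast h)
    push_cast at this
    rwa [← pow_succ'] at this
  rw [hX, card_filter_product_eq_sum, Nat.cast_sum, sum_congr rfl hfiber, sum_const, nsmul_eq_mul]
  ring
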